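/- (Gauss summation theorem) For complex numbers a, b, c with Re(c - a - b) > 0 and c not a nonpositive integer, the series ∑_{k=0}^{∞} (a)_k (b)_k / ((c)_k · k!) converges and equals Γ(c)Γ(c-a-b) / (Γ(c-a)Γ(c-b)). -/

import Mathlib

open Complex Finset

/-- Pochhammer symbol `(x)_k = x (x+1) ⋯ (x+k-1)`. -/
noncomputable def poch (x : ℂ) (k : ℕ) : ℂ := ∏ i ∈ Finset.range k, (x + i)

/-- Beta function `B(x,y) = Γ(x) Γ(y) / Γ(x+y)`. -/
noncomputable def cBeta (x y : ℂ) : ℂ :=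
  Complex.Gamma x * Complex.Gamma y / Complex.Gamma (x + y)

/-!
Write `F(c) = ∑ₖ Tₖ(c)` with `Tₖ(c) = (a)ₖ (b)ₖ / ((c)ₖ k!)`. Gauss's limit formula for `Γ`
gives `Tₖ(c) = O(k ^ (a + b - c - 1))`, so the series converges and `k Tₖ(c) → 0`. The
telescoping identity `c(c-a-b) Tₖ(c) - (c-a)(c-b) Tₖ(c+1) = c (k Tₖ(c) - (k+1) Tₖ₊₁(c))` then
yields the contiguous relation `c(c-a-b) F(c) = (c-a)(c-b) F(c+1)`, and iterating it,
`F(c) = (c-a)ₙ (c-b)ₙ / ((c)ₙ (c-a-b)ₙ) · F(c+n)`. As `n → ∞`, `F(c+n) → 1` by dominated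
convergence, while the Pochhammer quotient tends to `Γ(c) Γ(c-a-b) / (Γ(c-a) Γ(c-b))`, again
by Gauss's limit formula.
-/

open Filter Topology Asymptotics
open scoped Nat

lemma poch_zero (x : ℂ) : poch x 0 = 1 := prod_range_zero _

lemma poch_succ (x : ℂ) (k : ℕ) : poch x (k + 1) = poch x k * (x + k) :=
  prod_range_succ _ _

lemma mul_poch_add_one (x : ℂ) (k : ℕ) : x * poch (x + 1) k = poch x (k + 1) := by
  rw [poch, poch, prod_range_succ', Nat.cast_zero, add_zero, mul_comm]
  push_cast
  simp only [add_assoc, add_comm (1 : ℂ)]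

lemma poch_one (k : ℕ) : poch 1 k = k ! := by
  induction k with
  | zero => simp [poch_zero]
  | succ k ih => rw [poch_succ, ih, Nat.factorial_succ]; push_cast; ring

lemma poch_ne_zero {x : ℂ} (hx : ∀ m : ℕ, x ≠ -m) (k : ℕ) : poch x k ≠ 0 :=
  prod_ne_zero_iff.2 fun i _ h => hx i (eq_neg_of_add_eq_zero_left h)

lemma poch_neg_natCast_eq_zero {m k : ℕ} (h : m < k) : poch (-m) k = 0 :=
  prod_eq_zero (mem_range.2 h) (neg_add_cancel _)

lemma norm_poch_le_norm_poch {x y : ℂ} (h : ∀ i : ℕ, ‖x + i‖ ≤ ‖y + i‖) (k : ℕ) :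
    ‖poch x k‖ ≤ ‖poch y k‖ := by
  simp only [poch, norm_prod]
  exact prod_le_prod (fun _ _ => norm_nonneg _) fun i _ => h i

lemma ne_neg_natCast_of_re_pos {x : ℂ} (hx : 0 < x.re) (m : ℕ) : x ≠ -m := by
  rintro rfl
  simp only [neg_re, natCast_re, Left.neg_pos_iff] at hx
  linarith [m.cast_nonneg (α := ℝ)]

lemma add_natCast_ne_neg_natCast {x : ℂ} (hx : ∀ m : ℕ, x ≠ -m) (n m : ℕ) : x + n ≠ -m :=
  fun h => hx (m + n) (by push_cast; linear_combination h)

lemma tendsto_cpow_mul_factorial_div_poch (x : ℂ) :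
    Tendsto (fun n : ℕ => (n : ℂ) ^ x * n ! / (n * poch x n)) atTop (𝓝 (Gamma x)) := by
  have hlim : Tendsto (fun n : ℕ => GammaSeq x n * (x / n + 1)) atTop (𝓝 (Gamma x)) := by
    simpa using (GammaSeq_tendsto_Gamma x).mul
      ((tendsto_const_div_atTop_nhds_zero_nat x).add_const 1)
  refine hlim.congr' ?_
  filter_upwards [eventually_gt_atTop 0,
    (tendsto_natCast_atTop_atTop (R := ℝ)).eventually_gt_atTop ‖x‖] with n hn hxn
  have hn0 : (n : ℂ) ≠ 0 := Nat.cast_ne_zero.2 hn.ne'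
  have hxn0 : x + n ≠ 0 := fun h => by
    rw [eq_neg_of_add_eq_zero_left h, norm_neg, Complex.norm_natCast] at hxn
    exact hxn.false
  rw [GammaSeq, ← poch, poch_succ]
  field_simp

lemma tendsto_cpow_mul_poch_div_poch (p q r s : ℂ) :
    Tendsto (fun n : ℕ =>
        (n : ℂ) ^ (r + s - p - q) * (poch p n * poch q n / (poch r n * poch s n))) atTop
      (𝓝 (Gamma r * Gamma s / (Gamma p * Gamma q))) := by
  by_cases hpq : Gamma p * Gamma q = 0
  -- At a pole of `Γ` both sides vanish: `poch (-m) n = 0` for `n > m`, and `x / 0 = 0`.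
  · rw [hpq, div_zero]
    obtain ⟨m, rfl⟩ | ⟨m, rfl⟩ :=
      (mul_eq_zero.1 hpq).imp (Gamma_eq_zero_iff _).1 (Gamma_eq_zero_iff _).1
    all_goals
      refine tendsto_const_nhds.congr' ?_
      filter_upwards [eventually_gt_atTop m] with n hn
      simp [poch_neg_natCast_eq_zero hn]
  · set A : ℂ → ℕ → ℂ := fun x n => (n : ℂ) ^ x * n ! / (n * poch x n)
    have hlim : Tendsto (fun n => A r n * A s n / (A p n * A q n)) atTop
        (𝓝 (Gamma r * Gamma s / (Gamma p * Gamma q))) :=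
      ((tendsto_cpow_mul_factorial_div_poch r).mul (tendsto_cpow_mul_factorial_div_poch s)).div
        ((tendsto_cpow_mul_factorial_div_poch p).mul (tendsto_cpow_mul_factorial_div_poch q)) hpq
    refine hlim.congr' ?_
    filter_upwards [eventually_gt_atTop 0] with n hn
    have hn0 : (n : ℂ) ≠ 0 := Nat.cast_ne_zero.2 hn.ne'
    have hfac : (n ! : ℂ) ≠ 0 := Nat.cast_ne_zero.2 n.factorial_ne_zero
    rw [cpow_sub _ _ hn0, cpow_sub _ _ hn0, cpow_add _ _ hn0]
    simp only [A, div_eq_mul_inv, mul_inv, inv_inv]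
    field_simp

noncomputable def gaussTerm (a b c : ℂ) (k : ℕ) : ℂ :=
  poch a k * poch b k / (poch c k * k !)

lemma gaussTerm_zero (a b c : ℂ) : gaussTerm a b c 0 = 1 := by
  simp [gaussTerm, poch_zero]

lemma gaussTerm_succ (a b c : ℂ) (k : ℕ) :
    gaussTerm a b c (k + 1) =
      gaussTerm a b c k * ((a + k) * (b + k) / ((c + k) * (k + 1))) := by
  simp only [gaussTerm, poch_succ, Nat.factorial_succ]
  push_cast
  rw [div_mul_div_comm]
  ring_nf

lemma gaussTerm_add_one {c : ℂ} (a b : ℂ) (hc : c ≠ 0) (k : ℕ) :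
    gaussTerm a b (c + 1) k = gaussTerm a b c k * (c / (c + k)) := by
  rw [gaussTerm, gaussTerm, div_mul_div_comm, mul_right_comm (poch c k), ← poch_succ,
    ← mul_poch_add_one, mul_assoc c, mul_comm _ c, mul_div_mul_left _ _ hc]

lemma tendsto_cpow_mul_gaussTerm (a b c : ℂ) :
    Tendsto (fun n : ℕ => (n : ℂ) ^ (c + 1 - a - b) * gaussTerm a b c n) atTop
      (𝓝 (Gamma c / (Gamma a * Gamma b))) := by
  simpa [gaussTerm, poch_one] using tendsto_cpow_mul_poch_div_poch a b c 1

lemma gaussTerm_isBigO (a b c : ℂ) :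
    gaussTerm a b c =O[atTop] fun n : ℕ => (n : ℝ) ^ (-(c - a - b).re - 1) := by
  have hbdd := (tendsto_cpow_mul_gaussTerm a b c).isBigO_one ℝ
  have hpow : (fun n : ℕ => (n : ℂ) ^ (-(c + 1 - a - b))) =O[atTop]
      fun n : ℕ => (n : ℝ) ^ (-(c - a - b).re - 1) := by
    refine IsBigO.of_norm_eventuallyLE ?_
    filter_upwards [eventually_gt_atTop 0] with n hn
    rw [norm_natCast_cpow_of_pos hn]
    exact le_of_eq (congrArg _ (by simp only [neg_sub, sub_re, add_re, one_re]; ring))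
  refine (hpow.mul hbdd).congr' ?_ (by simp)
  filter_upwards [eventually_gt_atTop 0] with n hn
  rw [← mul_assoc, ← cpow_add _ _ (Nat.cast_ne_zero.2 hn.ne'), neg_add_cancel, cpow_zero, one_mul]

section

variable {a b c : ℂ}

lemma summable_norm_gaussTerm (h : 0 < (c - a - b).re) : Summable (‖gaussTerm a b c ·‖) :=
  summable_of_isBigO_nat (Real.summable_nat_rpow.2 (by linarith))
    (gaussTerm_isBigO a b c).norm_left

lemma tendsto_natCast_mul_gaussTerm (h : 0 < (c - a - b).re) :
    Tendsto (fun n : ℕ => n * gaussTerm a b c n) atTop (𝓝 0) := by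
  have hcast : (fun n : ℕ => (n : ℂ)) =O[atTop] fun n : ℕ => (n : ℝ) :=
    isBigO_of_le _ fun n => by simp
  refine ((hcast.mul (gaussTerm_isBigO a b c)).trans_tendsto ?_)
  have := (tendsto_rpow_neg_atTop h).comp tendsto_natCast_atTop_atTop
  refine this.congr' ?_
  filter_upwards [eventually_gt_atTop 0] with n hn
  rw [Function.comp_apply, Real.rpow_sub (by positivity), Real.rpow_one]
  field_simp

lemma gaussTerm_contiguous (hc : ∀ m : ℕ, c ≠ -m) (k : ℕ) :
    c * (c - a - b) * gaussTerm a b c k - (c - a) * (c - b) * gaussTerm a b (c + 1) k =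
      c * (k * gaussTerm a b c k - (k + 1 : ℕ) * gaussTerm a b c (k + 1)) := by
  have hc0 : c ≠ 0 := by simpa using hc 0
  have hck : c + k ≠ 0 := by simpa using add_natCast_ne_neg_natCast hc k 0
  have hk : (k : ℂ) + 1 ≠ 0 := Nat.cast_add_one_ne_zero k
  rw [gaussTerm_add_one a b hc0, gaussTerm_succ]
  push_cast
  field_simp
  ring

lemma tsum_gaussTerm_contiguous (hc : ∀ m : ℕ, c ≠ -m) (h : 0 < (c - a - b).re) :
    c * (c - a - b) * ∑' k, gaussTerm a b c k =
      (c - a) * (c - b) * ∑' k, gaussTerm a b (c + 1) k := by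
  have h1 : 0 < (c + 1 - a - b).re := by simp only [sub_re, add_re, one_re] at h ⊢; linarith
  have hsum := ((summable_norm_gaussTerm h).of_norm.hasSum.mul_left (c * (c - a - b))).sub
    ((summable_norm_gaussTerm h1).of_norm.hasSum.mul_left ((c - a) * (c - b)))
  have htel : Tendsto (fun n => ∑ k ∈ range n, (c * (c - a - b) * gaussTerm a b c k -
      (c - a) * (c - b) * gaussTerm a b (c + 1) k)) atTop (𝓝 0) := by
    simp only [gaussTerm_contiguous hc, ← mul_sum,
      sum_range_sub' (fun k : ℕ => (k : ℂ) * gaussTerm a b c k)]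
    simpa using ((tendsto_natCast_mul_gaussTerm h).const_mul c).neg
  exact sub_eq_zero.1 (tendsto_nhds_unique hsum.tendsto_sum_nat htel)

lemma poch_mul_tsum_gaussTerm (hc : ∀ m : ℕ, c ≠ -m) (h : 0 < (c - a - b).re) (n : ℕ) :
    poch c n * poch (c - a - b) n * ∑' k, gaussTerm a b c k =
      poch (c - a) n * poch (c - b) n * ∑' k, gaussTerm a b (c + n) k := by
  induction n with
  | zero => simp [poch_zero]
  | succ n ih =>
    have hn : 0 < (c + n - a - b).re := by
      simp only [sub_re, add_re, natCast_re] at h ⊢; linarith [n.cast_nonneg (α := ℝ)]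
    have hrel := tsum_gaussTerm_contiguous (add_natCast_ne_neg_natCast hc n) hn
    simp only [poch_succ, Nat.cast_succ, ← add_assoc]
    linear_combination ((c + n) * (c - a - b + n)) * ih + poch (c - a) n * poch (c - b) n * hrel

end

lemma norm_ofReal_add_natCast {x : ℝ} (hx : 0 ≤ x) (i : ℕ) : ‖(x : ℂ) + i‖ = x + i := by
  rw [← ofReal_natCast, ← ofReal_add, norm_real, Real.norm_of_nonneg (by positivity)]

lemma norm_gaussTerm_add_natCast_le {a b c : ℂ} {n : ℕ} (hn : ‖c‖ + ‖a‖ + ‖b‖ + 1 ≤ n)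
    (k : ℕ) :
    ‖gaussTerm a b (c + n) k‖ ≤ ‖gaussTerm ‖a‖ ‖b‖ ((‖a‖ + ‖b‖ + 1 : ℝ) : ℂ) k‖ := by
  set y : ℝ := ‖a‖ + ‖b‖ + 1
  have hy : 0 < y := by positivity
  have hpoch : poch y k ≠ 0 := poch_ne_zero (ne_neg_natCast_of_re_pos (by simpa using hy)) k
  have hnum (x : ℂ) : ‖poch x k‖ ≤ ‖poch ‖x‖ k‖ := norm_poch_le_norm_poch (fun i => by
    rw [norm_ofReal_add_natCast (norm_nonneg x)]
    exact (norm_add_le _ _).trans_eq (by rw [Complex.norm_natCast])) k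
  have hden : ‖poch y k‖ ≤ ‖poch (c + n) k‖ := norm_poch_le_norm_poch (fun i => by
    have h := norm_add_le (c + n + i) (-c)
    rw [norm_neg, show c + n + i + -c = ((n + i : ℕ) : ℂ) by push_cast; ring,
      Complex.norm_natCast] at h
    push_cast at h
    rw [norm_ofReal_add_natCast hy.le]
    linarith [norm_nonneg a, norm_nonneg b]) k
  simp only [gaussTerm, norm_div, norm_mul, Complex.norm_natCast]
  gcongr
  · exact hnum a
  · exact hnum b

lemma tendsto_gaussTerm_add_natCast (a b c : ℂ) (k : ℕ) :
    Tendsto (fun n : ℕ => gaussTerm a b (c + n) k) atTop (𝓝 (if k = 0 then 1 else 0)) := by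
  cases k with
  | zero => simp [gaussTerm_zero]
  | succ k =>
    have hinv (i : ℕ) : Tendsto (fun n : ℕ => (c + n + i)⁻¹) atTop (𝓝 0) :=
      tendsto_inv₀_cobounded.comp <| (tendsto_add_const_cobounded _).comp <|
        (tendsto_const_add_cobounded c).comp tendsto_natCast_atTop_cobounded
    have hprod := (tendsto_finsetProd (range (k + 1)) fun i _ => hinv i).const_mul
      (poch a (k + 1) * poch b (k + 1) / (k + 1)!)
    simp only [prod_const, card_range, zero_pow (Nat.succ_ne_zero k), mul_zero] at hprod
    refine hprod.congr fun n => ?_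
    rw [gaussTerm, prod_inv_distrib, ← poch]
    ring

lemma tendsto_tsum_gaussTerm_add_natCast (a b c : ℂ) :
    Tendsto (fun n : ℕ => ∑' k, gaussTerm a b (c + n) k) atTop (𝓝 1) := by
  have hre : 0 < (((‖a‖ + ‖b‖ + 1 : ℝ) : ℂ) - ‖a‖ - ‖b‖).re := by
    simp only [ofReal_add, ofReal_one, sub_re, add_re, ofReal_re, one_re]
    linarith
  have hbound : ∀ᶠ n : ℕ in atTop, ∀ k, ‖gaussTerm a b (c + n) k‖ ≤ _ :=
    (tendsto_natCast_atTop_atTop.eventually_ge_atTop (‖c‖ + ‖a‖ + ‖b‖ + 1)).mono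
      fun n hn => norm_gaussTerm_add_natCast_le hn
  simpa using tendsto_tsum_of_dominated_convergence (summable_norm_gaussTerm hre)
    (tendsto_gaussTerm_add_natCast a b c) hbound

theorem gauss_summation (a b c : ℂ) (hc : ∀ k : ℕ, c ≠ -(k : ℂ))
    (h : 0 < (c - a - b).re) :
    HasSum (fun k : ℕ => poch a k * poch b k / (poch c k * (Nat.factorial k : ℂ)))
      (Complex.Gamma c * Complex.Gamma (c - a - b) /
        (Complex.Gamma (c - a) * Complex.Gamma (c - b))) := by
  have hratio := tendsto_cpow_mul_poch_div_poch (c - a) (c - b) c (c - a - b)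
  rw [show c + (c - a - b) - (c - a) - (c - b) = 0 by ring] at hratio
  have hlim := hratio.mul (tendsto_tsum_gaussTerm_add_natCast a b c)
  rw [mul_one] at hlim
  have hconst (n : ℕ) : (n : ℂ) ^ (0 : ℂ) * (poch (c - a) n * poch (c - b) n /
      (poch c n * poch (c - a - b) n)) * ∑' k, gaussTerm a b (c + n) k =
        ∑' k, gaussTerm a b c k := by
    have h₁ := poch_ne_zero hc n
    have h₂ := poch_ne_zero (ne_neg_natCast_of_re_pos h) n
    rw [cpow_zero, one_mul, div_mul_eq_mul_div, ← poch_mul_tsum_gaussTerm hc h n]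
    field_simp
  exact (summable_norm_gaussTerm h).of_norm.hasSum_iff.2
    (tendsto_nhds_unique tendsto_const_nhds (hlim.congr hconst))
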